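/- arXiv:2205.04548 — 2 statements merged into one kernel-verified Lean document; each statement's English description precedes it below -/
import Mathlib

section
/- Let G = (V, E) be a finite connected weighted graph with nonnegative edge weights w, let S be a minimum spanning tree of G, let e = {u, v} ∈ E \ S, and let h ∈ ℝ be a lower bound with h ≤ w(e). If h is strictly greater than the maximum weight of the edges on the unique path in S between u and v, then e is not contained in any minimum spanning tree of G. -/
open SimpleGraph

/-- A spanning tree of `G` is a subgraph of `G` (on the same vertex set) that is a tree. -/
def IsSpanningTree {V : Type*} (G H : SimpleGraph V) : Prop :=
  H ≤ G ∧ H.IsTree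

/-- The total weight of (the edges of) a graph `H` with edge-weight function `w`. -/
noncomputable def treeWeight {V : Type*} [Finite V] (H : SimpleGraph V)
    (w : Sym2 V → ℝ) : ℝ :=
  ∑ e ∈ (Set.toFinite H.edgeSet).toFinset, w e

/-- `H` is a minimum spanning tree of the weighted graph `(G, w)`. -/
def IsMST {V : Type*} [Finite V] (G : SimpleGraph V) (w : Sym2 V → ℝ)
    (H : SimpleGraph V) : Prop :=
  IsSpanningTree G H ∧ ∀ H', IsSpanningTree G H' → treeWeight H w ≤ treeWeight H' w

/-!
If an MST `H` contained `e = s(u, v)`, deleting `e` would split `H` into the part containing `u`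
and the part containing `v`. The path from `u` to `v` in `S` crosses between the two parts along
some edge `f`, with `w f < h ≤ w e`; then `H - e + f` is a spanning tree of `G` lighter than `H`.
-/

namespace SimpleGraph

variable {V : Type*} {G H : SimpleGraph V} {u v a b : V}

lemma Walk.reachable_deleteEdges_or {x : V} (p : G.Walk x u) (v : V) :
    (G.deleteEdges {s(u, v)}).Reachable x u ∨ (G.deleteEdges {s(u, v)}).Reachable x v := by
  induction p with
  | nil => exact Or.inl .rfl
  | @cons x z u hxz _ ih =>
    by_cases hx : s(x, z) = s(u, v)
    · rcases Sym2.eq_iff.mp hx with ⟨rfl, -⟩ | ⟨rfl, -⟩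
      exacts [Or.inl .rfl, Or.inr .rfl]
    · have hK : (G.deleteEdges {s(u, v)}).Adj x z := by simpa [deleteEdges_adj, hx] using hxz
      exact ih.imp hK.reachable.trans hK.reachable.trans

lemma Connected.reachable_deleteEdges_or (hG : G.Connected) (x : V) :
    (G.deleteEdges {s(u, v)}).Reachable x u ∨ (G.deleteEdges {s(u, v)}).Reachable x v :=
  (hG.preconnected x u).some.reachable_deleteEdges_or v

lemma Connected.of_deleteEdges_le_of_reachable (hG : G.Connected)
    (hle : G.deleteEdges {s(u, v)} ≤ H) (huv : H.Reachable u v) : H.Connected := by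
  have hu : ∀ x, H.Reachable x u := fun x ↦ (hG.reachable_deleteEdges_or x).elim
    (·.mono hle) (fun hxv ↦ (hxv.mono hle).trans huv.symm)
  have := hG.nonempty
  exact (connected_iff _).mpr ⟨fun x y ↦ (hu x).trans (hu y).symm, inferInstance⟩

lemma edgeSet_deleteEdges_sup_edge (hab : a ≠ b) (e : Sym2 V) :
    (G.deleteEdges {e} ⊔ edge a b).edgeSet = insert s(a, b) (G.edgeSet \ {e}) := by
  rw [edgeSet_sup, edgeSet_deleteEdges, edgeSet_edge, Set.insert_eq, Set.union_comm]
  congr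
  simpa using hab

lemma IsTree.exists_exchange [Finite V] {S : SimpleGraph V} (hH : H.IsTree) (huv : H.Adj u v)
    (p : S.Walk u v) (hp : s(u, v) ∉ p.edges) :
    ∃ f ∈ p.edges, f ∉ H.edgeSet ∧ ∃ H' : SimpleGraph V, H'.IsTree ∧ H' ≤ H ⊔ S ∧
      H'.edgeSet = insert f (H.edgeSet \ {s(u, v)}) := by
  set K := H.deleteEdges {s(u, v)}
  have hsplit : ¬ K.Reachable u v :=
    isBridge_iff.mp (isAcyclic_iff_forall_adj_isBridge.mp hH.isAcyclic huv)
  obtain ⟨⟨⟨a, b⟩, hSab⟩, hd, hua, hub⟩ :=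
    p.exists_boundary_dart {x | K.Reachable u x} .rfl hsplit
  have hf : s(a, b) ∈ p.edges := List.mem_map_of_mem hd
  have hbv : K.Reachable b v :=
    (hH.connected.reachable_deleteEdges_or b).resolve_left fun h ↦ hub h.symm
  have hab : ¬ H.Adj a b := fun h ↦ hub <| hua.trans <| Adj.reachable <|
    (deleteEdges_adj ..).mpr ⟨h, fun he ↦ hp (Set.mem_singleton_iff.mp he ▸ hf)⟩
  have hE := edgeSet_deleteEdges_sup_edge (G := H) hSab.ne s(u, v)
  have hconn : (K ⊔ edge a b).Connected := by
    refine hH.connected.of_deleteEdges_le_of_reachable le_sup_left ?_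
    have hab' : (K ⊔ edge a b).Adj a b := .inr ((adj_edge a b).mpr ⟨rfl, hSab.ne⟩)
    exact (hua.mono le_sup_left).trans (hab'.reachable.trans (hbv.mono le_sup_left))
  refine ⟨s(a, b), hf, hab, K ⊔ edge a b, ?_, ?_, hE⟩
  · refine isTree_iff_connected_and_card.mpr ⟨hconn, ?_⟩
    rw [Nat.card_coe_set_eq, hE, Set.ncard_exchange (s := H.edgeSet) (a := s(a, b)) hab huv,
      ← Nat.card_coe_set_eq]
    exact (isTree_iff_connected_and_card.mp hH).2
  · exact sup_le_sup (deleteEdges_le _) (S.edge_le_iff.mpr (.inr hSab))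

end SimpleGraph

lemma treeWeight_of_edgeSet_eq_insert_diff {V : Type*} [Finite V] {H H' : SimpleGraph V}
    {e f : Sym2 V} (hE : H'.edgeSet = insert f (H.edgeSet \ {e})) (he : e ∈ H.edgeSet)
    (hf : f ∉ H.edgeSet) (w : Sym2 V → ℝ) :
    treeWeight H' w = treeWeight H w - w e + w f := by
  classical
  have hfin : (Set.toFinite H'.edgeSet).toFinset
      = insert f ((Set.toFinite H.edgeSet).toFinset.erase e) := by
    ext; simp [hE, and_comm]
  rw [treeWeight, treeWeight, hfin, Finset.sum_insert (by simp [hf]),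
    Finset.sum_erase_eq_sub (by simpa using he)]
  ring

theorem mst_prune_with_lower_bound_general {V : Type*} [Fintype V]
    (G : SimpleGraph V) (w : Sym2 V → ℝ)
    (S : SimpleGraph V) (hS : IsMST G w S)
    (u v : V)
    (h : ℝ) (hle : h ≤ w s(u, v))
    (hgt : ∀ (p : S.Walk u v), p.IsPath → ∀ f ∈ p.edges, w f < h) :
    ∀ H, IsMST G w H → s(u, v) ∉ H.edgeSet := by
  rintro H ⟨⟨hHG, hH⟩, hHmin⟩ he
  obtain ⟨p, hp, -⟩ := hS.1.2.existsUnique_path u v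
  have hpe : s(u, v) ∉ p.edges := fun hep ↦ (hgt p hp _ hep).not_ge hle
  obtain ⟨f, hfp, hfH, H', hH', hH'le, hE⟩ := hH.exists_exchange he p hpe
  have hmin := hHmin H' ⟨hH'le.trans (sup_le hHG hS.1.1), hH'⟩
  rw [treeWeight_of_edgeSet_eq_insert_diff hE he hfH] at hmin
  linarith [hgt p hp f hfp]

/-- Pruning with a lower bound: if `S` is an MST of `G`, `e = s(u,v) ∈ E \ S`, and
`h ≤ w e` is a lower bound that is strictly greater than the weight of every edge on
the unique path in `S` between `u` and `v`, then `e` is in no MST of `G`. -/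
theorem mst_prune_with_lower_bound {V : Type*} [Fintype V]
    (G : SimpleGraph V) (w : Sym2 V → ℝ)
    (hG : G.Connected) (hw : ∀ e, 0 ≤ w e)
    (S : SimpleGraph V) (hS : IsMST G w S)
    (u v : V) (hGe : G.Adj u v) (hSe : ¬ S.Adj u v)
    (h : ℝ) (hle : h ≤ w s(u, v))
    (hgt : ∀ (p : S.Walk u v), p.IsPath → ∀ f ∈ p.edges, w f < h) :
    ∀ H, IsMST G w H → s(u, v) ∉ H.edgeSet :=
  mst_prune_with_lower_bound_general G w S hS u v h hle hgt
end

section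
/- Let G = (V, E) be a finite connected weighted graph with nonnegative edge weights w, let T ⊆ V with |T| ≥ 2, and let s, d ∈ T. Then for every walk in G that starts at s, ends at d, and visits every vertex of T at least once, the total weight of the walk is at least the minimum total weight of a spanning tree of the metric completion of T. -/
/-!
Replacing each stretch of the walk between consecutive terminal visits by the corresponding
edge of the metric completion yields a walk in the completion that visits all of `T` and weighs
no more than the original one, because each such edge weighs a distance, which is at most the
weight of the stretch. The edges of this shortcut walk form a connected spanning subgraph of the
completion, so it contains a spanning tree, whose weight bounds that of the minimum spanning tree.
-/

open SimpleGraph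

/-- Weighted graph distance: the minimum (infimum) total weight of a walk from `u` to
`v` in `G`. -/
noncomputable def wdist {V : Type*} (G : SimpleGraph V) (w : Sym2 V → ℝ) (u v : V) : ℝ :=
  sInf {x | ∃ p : G.Walk u v, x = (p.edges.map w).sum}

theorem List.sum_map_toFinset_le_sum_map {α M : Type*} [DecidableEq α] [AddCommMonoid M]
    [PartialOrder M] [IsOrderedAddMonoid M] (l : List α) {f : α → M}
    (hf : ∀ a ∈ l, 0 ≤ f a) : ∑ a ∈ l.toFinset, f a ≤ (l.map f).sum := by
  have hdedup : l.toFinset = l.dedup.toFinset := by ext; simp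
  rw [hdedup, List.sum_toFinset f (List.nodup_dedup l)]
  exact ((List.dedup_sublist l).map f).sum_le_sum (by simpa using hf)

namespace SimpleGraph

variable {V : Type*} {G : SimpleGraph V} {w : Sym2 V → ℝ}

theorem Walk.sum_map_edges_nonneg (hw : ∀ e, 0 ≤ w e) {u v : V} (p : G.Walk u v) :
    0 ≤ (p.edges.map w).sum :=
  List.sum_nonneg (by simpa using fun e _ => hw e)

theorem wdist_nonneg (hw : ∀ e, 0 ≤ w e) (u v : V) : 0 ≤ wdist G w u v :=
  Real.sInf_nonneg (by rintro _ ⟨p, rfl⟩; exact p.sum_map_edges_nonneg hw)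

theorem wdist_le_sum_map_edges (hw : ∀ e, 0 ≤ w e) {u v : V} (p : G.Walk u v) :
    wdist G w u v ≤ (p.edges.map w).sum :=
  csInf_le ⟨0, by rintro _ ⟨p, rfl⟩; exact p.sum_map_edges_nonneg hw⟩ ⟨p, rfl⟩

theorem treeWeight_mono [Finite V] {H K : SimpleGraph V} (hHK : H ≤ K)
    (hw : ∀ e ∈ K.edgeSet, 0 ≤ w e) : treeWeight H w ≤ treeWeight K w :=
  Finset.sum_le_sum_of_subset_of_nonneg
    (Set.Finite.toFinset_subset_toFinset.mpr (edgeSet_mono hHK))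
    (fun e he _ => hw e ((Set.Finite.mem_toFinset _).mp he))

theorem Walk.treeWeight_spanningCoe_toSubgraph_le [Finite V] (hw : ∀ e, 0 ≤ w e) {u v : V}
    (p : G.Walk u v) : treeWeight p.toSubgraph.spanningCoe w ≤ (p.edges.map w).sum := by
  classical
  have hedges : (Set.toFinite p.toSubgraph.spanningCoe.edgeSet).toFinset = p.edges.toFinset := by
    ext e
    simp [Walk.edgeSet_toSubgraph]
  rw [treeWeight, hedges]
  exact p.edges.sum_map_toFinset_le_sum_map fun e _ => hw e

theorem Walk.connected_spanningCoe_toSubgraph {u v : V} (p : G.Walk u v)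
    (hp : ∀ x, x ∈ p.support) : p.toSubgraph.spanningCoe.Connected := by
  classical
  refine (connected_iff_exists_forall_reachable _).mpr ⟨u, fun x => ?_⟩
  refine ⟨(p.takeUntil x (hp x)).transfer _ fun e he => ?_⟩
  simpa [Walk.edgeSet_toSubgraph] using p.edges_takeUntil_subset_edges (hp x) he

section Shortcut

variable {T : Set V} {wT : Sym2 T → ℝ}

theorem exists_top_walk_sum_le (hw : ∀ e, 0 ≤ w e)
    (hwT : ∀ (a b : T) (r : G.Walk a b), wT s(a, b) ≤ (r.edges.map w).sum)
    (a b : T) (r : G.Walk a b) :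
    ∃ q : (⊤ : SimpleGraph T).Walk a b, (q.edges.map wT).sum ≤ (r.edges.map w).sum := by
  by_cases hab : a = b
  · subst hab
    exact ⟨.nil, by simpa using r.sum_map_edges_nonneg hw⟩
  · exact ⟨.cons ((top_adj a b).mpr hab) .nil, by simpa using hwT a b r⟩

/-- `r` is the stretch walked since the last terminal `u`; each new terminal is joined to the
previous one by an edge of `⊤` whose weight is bounded by that stretch. -/
theorem Walk.exists_shortcut (hw : ∀ e, 0 ≤ w e)
    (hwT : ∀ (a b : T) (r : G.Walk a b), wT s(a, b) ≤ (r.edges.map w).sum)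
    {x v : V} (p : G.Walk x v) (u : T) (r : G.Walk u x) :
    ∃ (t : T) (q : (⊤ : SimpleGraph T).Walk u t),
      (∀ a : T, (a : V) ∈ p.support → a ∈ q.support) ∧
      (q.edges.map wT).sum ≤ (r.edges.map w).sum + (p.edges.map w).sum := by
  induction p generalizing u with
  | @nil x =>
    by_cases hx : x ∈ T
    · obtain ⟨q, hq⟩ := exists_top_walk_sum_le hw hwT u ⟨x, hx⟩ r
      refine ⟨_, q, fun a ha => ?_, by simpa using hq⟩
      obtain rfl : a = ⟨x, hx⟩ := Subtype.ext (by simpa using ha)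
      exact q.end_mem_support
    · refine ⟨u, .nil, fun a ha => ?_, by simpa using r.sum_map_edges_nonneg hw⟩
      obtain rfl : (a : V) = x := by simpa using ha
      exact absurd a.2 hx
  | @cons x y v h p ih =>
    by_cases hx : x ∈ T
    · obtain ⟨q₀, hq₀⟩ := exists_top_walk_sum_le hw hwT u ⟨x, hx⟩ r
      obtain ⟨t, q, hcover, hq⟩ := ih ⟨x, hx⟩ (.cons h .nil)
      refine ⟨t, q₀.append q, fun a ha => ?_, ?_⟩
      · rw [Walk.support_cons, List.mem_cons] at ha
        rw [Walk.mem_support_append_iff]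
        rcases ha with hax | hap
        · obtain rfl : a = ⟨x, hx⟩ := Subtype.ext hax
          exact .inl q₀.end_mem_support
        · exact .inr (hcover a hap)
      · simp only [Walk.edges_append, Walk.edges_cons, Walk.edges_nil, List.map_append,
          List.map_cons, List.map_nil, List.sum_append, List.sum_cons, List.sum_nil] at hq ⊢
        linarith
    · obtain ⟨t, q, hcover, hq⟩ := ih u (r.concat h)
      refine ⟨t, q, fun a ha => ?_, ?_⟩
      · rw [Walk.support_cons, List.mem_cons] at ha
        exact ha.elim (fun hax => absurd (hax ▸ a.2) hx) (hcover a)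
      · simp only [Walk.edges_concat, Walk.edges_cons, List.concat_eq_append, List.map_append,
          List.map_cons, List.map_nil, List.sum_append, List.sum_cons, List.sum_nil] at hq ⊢
        linarith

end Shortcut

theorem IsMST.treeWeight_le_of_connected [Finite V] {H K : SimpleGraph V} (hH : IsMST G w H)
    (hKG : K ≤ G) (hK : K.Connected) (hw : ∀ e ∈ K.edgeSet, 0 ≤ w e) :
    treeWeight H w ≤ treeWeight K w := by
  obtain ⟨K', hK'K, hK'⟩ := hK.exists_isTree_le
  exact (hH.2 K' ⟨hK'K.trans hKG, hK'⟩).trans (treeWeight_mono hK'K hw)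

end SimpleGraph

theorem terminal_walk_weight_ge_mst_general {V : Type*} [Fintype V]
    (G : SimpleGraph V) (w : Sym2 V → ℝ)
    (hw : ∀ e, 0 ≤ w e)
    (T : Set V)
    (s d : V) (hs : s ∈ T)
    (wN : Sym2 ↥T → ℝ) (hwN : ∀ a b : ↥T, wN s(a, b) = wdist G w ↑a ↑b)
    (H : SimpleGraph ↥T) (hH : IsMST (⊤ : SimpleGraph ↥T) wN H)
    (p : G.Walk s d) (hp : ∀ t ∈ T, t ∈ p.support) :
    treeWeight H wN ≤ (p.edges.map w).sum := by
  have hwN_le (a b : T) (r : G.Walk a b) : wN s(a, b) ≤ (r.edges.map w).sum :=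
    hwN a b ▸ wdist_le_sum_map_edges hw r
  have hwN_nonneg (e : Sym2 T) : 0 ≤ wN e :=
    Sym2.ind (fun a b => hwN a b ▸ wdist_nonneg hw a b) e
  obtain ⟨t, q, hcover, hq⟩ := p.exists_shortcut hw hwN_le ⟨s, hs⟩ .nil
  have hconn := q.connected_spanningCoe_toSubgraph fun a => hcover a (hp a a.2)
  calc treeWeight H wN
      ≤ treeWeight q.toSubgraph.spanningCoe wN :=
        hH.treeWeight_le_of_connected le_top hconn fun e _ => hwN_nonneg e
    _ ≤ (q.edges.map wN).sum := q.treeWeight_spanningCoe_toSubgraph_le hwN_nonneg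
    _ ≤ (p.edges.map w).sum := by simpa using hq

/-- Every walk in a finite connected graph `G` (nonnegative weights) that starts at
`s ∈ T`, ends at `d ∈ T`, and visits every vertex of the terminal set `T` (`|T| ≥ 2`)
has total weight at least the minimum weight of a spanning tree of the metric
completion of `T`. -/
theorem terminal_walk_weight_ge_mst {V : Type*} [Fintype V]
    (G : SimpleGraph V) (w : Sym2 V → ℝ)
    (hG : G.Connected) (hw : ∀ e, 0 ≤ w e)
    (T : Set V) (hT : 2 ≤ T.ncard)
    (s d : V) (hs : s ∈ T) (hd : d ∈ T)
    (wN : Sym2 ↥T → ℝ) (hwN : ∀ a b : ↥T, wN s(a, b) = wdist G w ↑a ↑b)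
    (H : SimpleGraph ↥T) (hH : IsMST (⊤ : SimpleGraph ↥T) wN H)
    (p : G.Walk s d) (hp : ∀ t ∈ T, t ∈ p.support) :
    treeWeight H wN ≤ (p.edges.map w).sum :=
  terminal_walk_weight_ge_mst_general G w hw T s d hs wN hwN H hH p hp
end
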